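/- Let h : ℝ → ℂ be continuous with integrable Fourier transform, so h(t) = ∫_ℝ g(s) e^{ist} ds with g ∈ L¹(ℝ). Then the polynomial integral momentum with p = 1, φ(λ₀,...,λₙ) = ∫_{Sₙ} h(∑_{j=0}^n sⱼλⱼ) dσₙ, admits the representation φ(λ₀,...,λₙ) = ∫_ℝ ∫_{Sₙ} (∏_{j=0}^n e^{is sⱼ λⱼ}) g(s) dσₙ ds, and consequently |φ(λ₀,...,λₙ)| ≤ (1/n!) ∫_ℝ |g(s)| ds for all (λ₀,...,λₙ) ∈ ℝ^{n+1}. -/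

import Mathlib

open MeasureTheory

lemma corner_closed (n : ℕ) (c : ℝ) :
    IsClosed {s : Fin n → ℝ | (∀ j, 0 ≤ s j) ∧ ∑ j, s j ≤ c} := by
  have h1 : IsClosed {s : Fin n → ℝ | ∀ j, 0 ≤ s j} := by
    have : {s : Fin n → ℝ | ∀ j, 0 ≤ s j} = ⋂ j, {s | 0 ≤ s j} := by ext; simp
    rw [this]
    exact isClosed_iInter fun j => isClosed_le continuous_const (continuous_apply j)
  have h2 : IsClosed {s : Fin n → ℝ | ∑ j, s j ≤ c} :=
    isClosed_le (continuous_finset_sum _ fun j _ => continuous_apply j) continuous_const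
  exact h1.inter h2

/-- The corner simplex `Rₙ = {s : sⱼ ≥ 0, ∑ sⱼ ≤ 1}` in `ℝⁿ`. -/
def Rset (n : ℕ) : Set (Fin n → ℝ) :=
  {s | (∀ j, 0 ≤ s j) ∧ ∑ j, s j ≤ 1}

/-- Extend `s ∈ Rₙ` to the point `(s₀, …, s_{n-1}, 1 - ∑ sⱼ)` of the simplex `Sₙ`. -/
noncomputable def simplexExt (n : ℕ) (s : Fin n → ℝ) : Fin (n + 1) → ℝ :=
  Fin.snoc s (1 - ∑ j, s j)

/-- The polynomial integral momentum with `p = 1`: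
`φ(λ₀,…,λₙ) = ∫_{Sₙ} h(∑ sⱼ λⱼ) dσₙ`. -/
noncomputable def phiMom (n : ℕ) (h : ℝ → ℂ) (lam : Fin (n + 1) → ℝ) : ℂ :=
  ∫ s in Rset n, h (∑ j, simplexExt n s j * lam j)

lemma normexp (s t : ℝ) : ‖Complex.exp (Complex.I * s * t)‖ = 1 := by
  rw [Complex.norm_exp]
  have : (Complex.I * s * t).re = 0 := by simp
  rw [this, Real.exp_zero]

lemma normexp' (s a b : ℝ) : ‖Complex.exp (Complex.I * s * a * b)‖ = 1 := by
  rw [Complex.norm_exp]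
  have : (Complex.I * s * a * b).re = 0 := by simp
  rw [this, Real.exp_zero]

lemma Rset_measurable (n : ℕ) : MeasurableSet (Rset n) :=
  (corner_closed n 1).measurableSet

lemma simplexExt_continuous (n : ℕ) (j : Fin (n + 1)) :
    Continuous fun s : Fin n → ℝ => simplexExt n s j := by
  unfold simplexExt
  refine Fin.lastCases ?_ (fun i => ?_) j
  · simp only [Fin.snoc_last]
    exact continuous_const.sub (continuous_finset_sum _ fun j _ => continuous_apply j)
  · simp only [Fin.snoc_castSucc]
    exact continuous_apply i
lemma corner_vol_le (n : ℕ) (c : ℝ) :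
    volume {s : Fin n → ℝ | (∀ j, 0 ≤ s j) ∧ ∑ j, s j ≤ c}
      ≤ ENNReal.ofReal (c ^ n / n.factorial) := by
  induction n generalizing c with
  | zero =>
      simp only [pow_zero, Nat.factorial_zero, Nat.cast_one, div_one, ENNReal.ofReal_one]
      calc volume {s : Fin 0 → ℝ | (∀ j, 0 ≤ s j) ∧ ∑ j, s j ≤ c}
          ≤ volume (Set.univ : Set (Fin 0 → ℝ)) := measure_mono (Set.subset_univ _)
        _ = 1 := by
          rw [volume_pi]
          simp
  | succ n ih =>
      rcases lt_or_ge c 0 with hc | hc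
      · have : {s : Fin (n+1) → ℝ | (∀ j, 0 ≤ s j) ∧ ∑ j, s j ≤ c} = ∅ := by
          ext s; simp only [Set.mem_setOf_eq, Set.mem_empty_iff_false, iff_false, not_and]
          intro h1 h2
          exact absurd (le_trans (Finset.sum_nonneg fun j _ => h1 j) h2) (not_le.2 hc)
        rw [this]; simp
      · set e := MeasurableEquiv.piFinSuccAbove (fun _ : Fin (n+1) => ℝ) 0 with he
        have hmp := measurePreserving_piFinSuccAbove (fun _ : Fin (n+1) => (volume : Measure ℝ)) 0
        set T : Set (ℝ × (Fin n → ℝ)) :=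
          {p | (0 ≤ p.1 ∧ ∀ j, 0 ≤ p.2 j) ∧ p.1 + ∑ j, p.2 j ≤ c} with hTdef
        have hTm : MeasurableSet T := by
          have : IsClosed T := by
            have c1 : IsClosed {p : ℝ × (Fin n → ℝ) | 0 ≤ p.1} :=
              isClosed_le continuous_const continuous_fst
            have c2 : IsClosed {p : ℝ × (Fin n → ℝ) | ∀ j, 0 ≤ p.2 j} := by
              have : {p : ℝ × (Fin n → ℝ) | ∀ j, 0 ≤ p.2 j} = ⋂ j, {p | 0 ≤ p.2 j} := by
                ext; simp
              rw [this]
              exact isClosed_iInter fun j =>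
                isClosed_le continuous_const ((continuous_apply j).comp continuous_snd)
            have c3 : IsClosed {p : ℝ × (Fin n → ℝ) | p.1 + ∑ j, p.2 j ≤ c} :=
              isClosed_le (continuous_fst.add
                (continuous_finset_sum _ fun j _ => (continuous_apply j).comp continuous_snd))
                continuous_const
            exact (c1.inter c2).inter c3
          exact this.measurableSet
        have hpre : {s : Fin (n+1) → ℝ | (∀ j, 0 ≤ s j) ∧ ∑ j, s j ≤ c} = e ⁻¹' T := by
          ext f
          have hef : e f = (f 0, fun j => f (Fin.succAbove 0 j)) := rfl
          simp only [Set.mem_preimage, hef, hTdef, Set.mem_setOf_eq, Fin.zero_succAbove,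
            Fin.forall_fin_succ, Fin.sum_univ_succ]
        rw [hpre, volume_pi, hmp.measure_preimage hTm.nullMeasurableSet, Measure.prod_apply hTm]
        simp_rw [← volume_pi]
        have hslice : ∀ x : ℝ, volume (Prod.mk x ⁻¹' T)
            ≤ Set.indicator (Set.Icc 0 c)
                (fun x => ENNReal.ofReal ((c - x) ^ n / n.factorial)) x := by
          intro x
          rcases le_or_gt 0 x with hx0 | hx0
          · rcases le_or_gt x c with hxc | hxc
            · rw [Set.indicator_of_mem (Set.mem_Icc.2 ⟨hx0, hxc⟩)]
              refine le_trans (measure_mono ?_) (ih (c - x))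
              intro s hs
              obtain ⟨⟨-, h1⟩, h2⟩ := hs
              exact ⟨h1, by linarith⟩
            · have : Prod.mk x ⁻¹' T = ∅ := by
                ext s
                simp only [Set.mem_preimage, hTdef, Set.mem_setOf_eq,
                  Set.mem_empty_iff_false, iff_false, not_and]
                rintro ⟨-, h1⟩
                have := Finset.sum_nonneg fun j (_ : j ∈ Finset.univ) => h1 j
                intro h2; linarith
              simp [this]
          · have : Prod.mk x ⁻¹' T = ∅ := by
              ext s
              simp only [Set.mem_preimage, hTdef, Set.mem_setOf_eq,
                Set.mem_empty_iff_false, iff_false, not_and]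
              rintro ⟨h0, -⟩
              exact absurd h0 (not_le.2 hx0)
            simp [this]
        calc ∫⁻ x, volume (Prod.mk x ⁻¹' T)
            ≤ ∫⁻ x, Set.indicator (Set.Icc 0 c)
                (fun x => ENNReal.ofReal ((c - x) ^ n / n.factorial)) x :=
              lintegral_mono hslice
          _ = ∫⁻ x in Set.Icc 0 c, ENNReal.ofReal ((c - x) ^ n / n.factorial) := by
              rw [lintegral_indicator]; exact measurableSet_Icc
          _ = ENNReal.ofReal (∫ x in Set.Icc 0 c, (c - x) ^ n / n.factorial) := by
              rw [← ofReal_integral_eq_lintegral_ofReal]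
              · exact (Continuous.integrableOn_Icc (by continuity))
              · filter_upwards [ae_restrict_mem measurableSet_Icc] with x hx
                have : 0 ≤ c - x := by linarith [hx.2]
                positivity
          _ = ENNReal.ofReal (c ^ (n+1) / (n+1).factorial) := by
              congr 1
              rw [integral_Icc_eq_integral_Ioc, ← intervalIntegral.integral_of_le hc]
              have : ∀ x, (c - x) ^ n / (n.factorial : ℝ)
                  = (1 / n.factorial : ℝ) • ((fun y => y ^ n) (c - x)) := by
                intro x; simp [div_eq_inv_mul, smul_eq_mul]
              simp_rw [this]
              rw [intervalIntegral.integral_smul, intervalIntegral.integral_comp_sub_left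
                (fun y => y ^ n) c]
              simp only [sub_self, sub_zero, integral_pow, smul_eq_mul]
              rw [Nat.factorial_succ]
              push_cast
              field_simp
              ring_nf

lemma Rset_vol_le (n : ℕ) :
    volume (Rset n) ≤ ENNReal.ofReal (1 / n.factorial) := by
  have := corner_vol_le n 1
  simpa [Rset] using this

lemma Rset_finite (n : ℕ) : IsFiniteMeasure (volume.restrict (Rset n)) := by
  constructor
  rw [Measure.restrict_apply_univ]
  exact lt_of_le_of_lt (Rset_vol_le n) ENNReal.ofReal_lt_top

theorem stmt15 (n : ℕ) (h : ℝ → ℂ) (g : ℝ → ℂ) (hc : Continuous h)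
    (hg : Integrable g)
    (hrep : ∀ t : ℝ, h t = ∫ s : ℝ, g s * Complex.exp (Complex.I * s * t)) :
    (∀ lam : Fin (n + 1) → ℝ,
        phiMom n h lam =
          ∫ s : ℝ, ∫ u in Rset n,
            (∏ j : Fin (n + 1),
              Complex.exp (Complex.I * s * simplexExt n u j * lam j)) * g s) ∧
      ∀ lam : Fin (n + 1) → ℝ,
        ‖phiMom n h lam‖ ≤ (1 / n.factorial : ℝ) * ∫ s : ℝ, ‖g s‖ := by
  haveI := Rset_finite n
  -- the total weight
  set V : ℝ := (volume (Rset n)).toReal with hVdef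
  have hV : V ≤ 1 / n.factorial :=
    ENNReal.toReal_le_of_le_ofReal (by positivity) (Rset_vol_le n)
  have key : ∀ lam : Fin (n + 1) → ℝ,
      phiMom n h lam =
        ∫ s : ℝ, ∫ u in Rset n,
          (∏ j : Fin (n + 1),
            Complex.exp (Complex.I * s * simplexExt n u j * lam j)) * g s := by
    intro lam
    set T : (Fin n → ℝ) → ℝ := fun u => ∑ j, simplexExt n u j * lam j with hTdef
    have hTc : Continuous T :=
      continuous_finset_sum _ fun j _ => (simplexExt_continuous n j).mul continuous_const
    have hprod : ∀ (u : Fin n → ℝ) (s : ℝ),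
        (∏ j : Fin (n + 1),
            Complex.exp (Complex.I * s * simplexExt n u j * lam j))
          = Complex.exp (Complex.I * s * (T u : ℂ)) := by
      intro u s
      rw [← Complex.exp_sum]
      congr 1
      rw [hTdef]
      push_cast
      rw [Finset.mul_sum]
      exact Finset.sum_congr rfl fun j _ => by ring
    -- integrability of the double integrand
    have hexpc : Continuous fun p : (Fin n → ℝ) × ℝ =>
        Complex.exp (Complex.I * p.2 * (T p.1 : ℂ)) := by
      apply Complex.continuous_exp.comp
      exact (continuous_const.mul (Complex.continuous_ofReal.comp continuous_snd)).mul
        (Complex.continuous_ofReal.comp (hTc.comp continuous_fst))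
    have hG : Integrable (fun p : (Fin n → ℝ) × ℝ => g p.2)
        ((volume.restrict (Rset n)).prod volume) := by
      have := (integrable_const (1 : ℂ) (μ := volume.restrict (Rset n))).mul_prod hg
      simpa using this
    have hF : Integrable
        (fun p : (Fin n → ℝ) × ℝ =>
          Complex.exp (Complex.I * p.2 * (T p.1 : ℂ)) * g p.2)
        ((volume.restrict (Rset n)).prod volume) := by
      refine hG.bdd_mul hexpc.aestronglyMeasurable (c := 1) (ae_of_all _ fun p => ?_)
      exact le_of_eq (normexp p.2 (T p.1))
    -- the chain of equalities
    have step1 : phiMom n h lam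
        = ∫ u in Rset n, ∫ s : ℝ,
            Complex.exp (Complex.I * s * (T u : ℂ)) * g s := by
      unfold phiMom
      refine integral_congr_ae (ae_of_all _ fun u => ?_)
      show h (∑ j, simplexExt n u j * lam j)
        = ∫ s : ℝ, Complex.exp (Complex.I * s * (T u : ℂ)) * g s
      rw [hrep]
      exact integral_congr_ae (ae_of_all _ fun s => mul_comm _ _)
    have step2 : (∫ u in Rset n, ∫ s : ℝ,
            Complex.exp (Complex.I * s * (T u : ℂ)) * g s)
        = ∫ s : ℝ, ∫ u in Rset n,
            Complex.exp (Complex.I * s * (T u : ℂ)) * g s :=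
      integral_integral_swap hF
    rw [step1, step2]
    refine integral_congr_ae (ae_of_all _ fun s => ?_)
    refine integral_congr_ae (ae_of_all _ fun u => ?_)
    exact congrArg (fun z => z * g s) (hprod u s).symm
  refine ⟨key, fun lam => ?_⟩
  have hbound : ∀ s : ℝ,
      ‖∫ u in Rset n,
          (∏ j : Fin (n + 1),
            Complex.exp (Complex.I * s * simplexExt n u j * lam j)) * g s‖
        ≤ ‖g s‖ * V := by
    intro s
    refine norm_setIntegral_le_of_norm_le_const ?_ fun u _ => ?_
    · exact lt_of_le_of_lt (Rset_vol_le n) ENNReal.ofReal_lt_top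
    · rw [norm_mul]
      have : ‖∏ j : Fin (n + 1),
          Complex.exp (Complex.I * s * simplexExt n u j * lam j)‖ = 1 := by
        rw [norm_prod]
        exact Finset.prod_eq_one fun j _ => normexp' s _ _
      rw [this, one_mul]
  calc ‖phiMom n h lam‖
      = ‖∫ s : ℝ, ∫ u in Rset n,
          (∏ j : Fin (n + 1),
            Complex.exp (Complex.I * s * simplexExt n u j * lam j)) * g s‖ := by
        rw [key lam]
    _ ≤ ∫ s : ℝ, ‖∫ u in Rset n,
          (∏ j : Fin (n + 1),
            Complex.exp (Complex.I * s * simplexExt n u j * lam j)) * g s‖ :=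
        norm_integral_le_integral_norm _
    _ ≤ ∫ s : ℝ, ‖g s‖ * V := by
        refine integral_mono_of_nonneg (ae_of_all _ fun s => norm_nonneg _)
          (hg.norm.mul_const V) (ae_of_all _ fun s => hbound s)
    _ = (∫ s : ℝ, ‖g s‖) * V := integral_mul_const _ _
    _ ≤ (∫ s : ℝ, ‖g s‖) * (1 / n.factorial) :=
        mul_le_mul_of_nonneg_left hV (integral_nonneg fun s => norm_nonneg _)
    _ = (1 / n.factorial : ℝ) * ∫ s : ℝ, ‖g s‖ := mul_comm _ _
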